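/- For all integers n ≥ 0 and k ≥ 1, every sequence of real numbers ᾱ = (α₀, α₁, …, α_{n−1}), all nonzero real numbers ℓ₁, …, ℓ_k, and every real number z, the multiparameter poly-Cauchy polynomials of the second kind are expressed through the multiparameter poly-Bernoulli polynomials by Ĉ_{n,L}^{(k)}(z;ᾱ) = Σ_{j=0}^{n} Σ_{m=j}^{n} (−1)^j (s_ᾱ(n,m) s_ᾱ(m,j) / m!) B_{j,ᾱ,L}^{(k)}(z). -/

import Mathlib

/-!
The integrand is `∏ ((z - t) - α i) = ∑ₘ s(n,m) (z - t)ᵐ`, and integrating `(z - t)ᵐ` term by term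
after the binomial theorem gives a closed form `cₘ`. Exchanging the sums in the poly-Bernoulli
polynomial shows `B_j(z) = (-1)ʲ ∑ₚ S(j,p) p! cₚ`, so the right-hand side is
`∑ₘ s(n,m)/m! ∑ⱼ s(m,j) ∑ₚ S(j,p) p! cₚ`. The inner double sum collapses to `m! cₘ` because the two
Stirling arrays are mutually inverse: evaluate on `∏_{i<m} (X - αᵢ)`, expanded through both of them,
the linear functional that sends the Newton basis polynomial `∏_{i<p} (X - αᵢ)` to `p! cₚ`.
-/

open Finset

/-- Iterated integral ∫₀^{ℓ₁}⋯∫₀^{ℓ_k} f(x₁x₂⋯x_k) dx₁⋯dx_k over the list of bounds. -/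
noncomputable def iterInt : List ℝ → (ℝ → ℝ) → ℝ
  | [], f => f 1
  | l :: ls, f => ∫ x in (0:ℝ)..l, iterInt ls (fun y => f (x * y))

section Stirling

open Polynomial

variable {R : Type*} [CommRing R]

theorem monic_prod_range_X_sub_C (α : ℕ → R) (p : ℕ) : (∏ i ∈ range p, (X - C (α i))).Monic :=
  monic_prod_of_monic _ _ fun i _ => monic_X_sub_C (α i)

noncomputable def newtonSequence [Nontrivial R] (α : ℕ → R) : Polynomial.Sequence R where
  elems' p := ∏ i ∈ range p, (X - C (α i))
  degree_eq' p := by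
    rw [degree_eq_natDegree (monic_prod_range_X_sub_C α p).ne_zero]
    simp

@[simp]
theorem newtonSequence_apply [Nontrivial R] (α : ℕ → R) (p : ℕ) :
    newtonSequence α p = ∏ i ∈ range p, (X - C (α i)) :=
  rfl

theorem sum_stirling_mul_sum_stirling [IsDomain R] [Infinite R] {n : ℕ} (α : ℕ → R)
    {s S : ℕ → ℕ → R}
    (hs : ∀ m ≤ n, ∀ x : R,
      ∏ i ∈ range m, (x - α i) = ∑ j ∈ range (m + 1), s m j * x ^ j)
    (hS : ∀ p ≤ n, ∀ x : R,
      x ^ p = ∑ m ∈ range (p + 1), S p m * ∏ i ∈ range m, (x - α i))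
    (f : ℕ → R) {m : ℕ} (hm : m ≤ n) :
    ∑ j ∈ range (m + 1), s m j * ∑ p ∈ range (j + 1), S j p * f p = f m := by
  set N := newtonSequence α
  have hunit : ∀ p, IsUnit (N p).leadingCoeff := fun p => by
    simp [N, (monic_prod_range_X_sub_C α p).leadingCoeff]
  let Λ : R[X] →ₗ[R] R := (N.basis hunit).constr R f
  have hΛ_newton : ∀ p, Λ (N p) = f p := fun p => by
    rw [← N.basis_eq_self hunit p]
    exact (N.basis hunit).constr_basis R f p
  have hΛ_pow : ∀ j ≤ n, Λ (X ^ j) = ∑ p ∈ range (j + 1), S j p * f p := by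
    intro j hj
    have hX : X ^ j = ∑ p ∈ range (j + 1), S j p • N p :=
      Polynomial.funext fun x => by simp [N, eval_finsetSum, eval_prod, hS j hj x]
    simp [hX, map_sum, hΛ_newton]
  have hN : N m = ∑ j ∈ range (m + 1), s m j • X ^ j :=
    Polynomial.funext fun x => by simp [N, eval_finsetSum, eval_prod, hs m hm x]
  rw [← hΛ_newton, hN, map_sum]
  refine sum_congr rfl fun j hj => ?_
  rw [map_smul, hΛ_pow j ((mem_range_succ_iff.mp hj).trans hm), smul_eq_mul]

end Stirling

theorem sum_range_sum_Icc_comm {M : Type*} [AddCommMonoid M] (n : ℕ) (f : ℕ → ℕ → M) :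
    ∑ i ∈ range (n + 1), ∑ p ∈ Icc i n, f i p =
      ∑ p ∈ range (n + 1), ∑ i ∈ range (p + 1), f i p := by
  simp only [← Nat.Ico_zero_eq_range, ← Ico_add_one_right_eq_Icc]
  exact sum_Ico_Ico_comm _ _ _

theorem iterInt_sum_mul_pow {ι : Type*} (s : Finset ι) (e : ι → ℕ) (l : List ℝ) (c : ι → ℝ) :
    iterInt l (fun t => ∑ i ∈ s, c i * t ^ e i) =
      ∑ i ∈ s, c i * l.prod ^ (e i + 1) / ((e i : ℝ) + 1) ^ l.length := by
  induction l generalizing c with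
  | nil => simp [iterInt]
  | cons a ls ih =>
    have inner : ∀ x : ℝ, iterInt ls (fun y => ∑ i ∈ s, c i * (x * y) ^ e i) =
        ∑ i ∈ s, c i * ls.prod ^ (e i + 1) / ((e i : ℝ) + 1) ^ ls.length * x ^ e i := by
      intro x
      simp_rw [mul_pow, ← mul_assoc, ih, mul_right_comm _ (x ^ _), mul_div_right_comm]
    simp only [iterInt, inner]
    rw [intervalIntegral.integral_finsetSum fun i _ =>
      (by fun_prop : Continuous _).intervalIntegrable _ _]
    refine sum_congr rfl fun i _ => ?_
    rw [intervalIntegral.integral_const_mul, integral_pow]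
    simp only [List.prod_cons, List.length_cons]
    field_simp
    ring

-- `∫₀^{ℓ₁}⋯∫₀^{ℓ_k} (z - x₁⋯x_k)ᵐ` for `P = ℓ₁⋯ℓ_k`
noncomputable def subPowIntegral (P : ℝ) (k : ℕ) (z : ℝ) (m : ℕ) : ℝ :=
  ∑ i ∈ range (m + 1), (-1) ^ (m - i) * m.choose i * z ^ i * P ^ (m - i + 1) /
    (((m - i : ℕ) : ℝ) + 1) ^ k

theorem iterInt_sum_mul_sub_pow (l : List ℝ) (z : ℝ) (N : ℕ) (a : ℕ → ℝ) :
    iterInt l (fun t => ∑ m ∈ range N, a m * (z - t) ^ m) =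
      ∑ m ∈ range N, a m * subPowIntegral l.prod l.length z m := by
  have expand : ∀ t : ℝ, ∑ m ∈ range N, a m * (z - t) ^ m =
      ∑ x ∈ (range N).sigma (fun m => range (m + 1)),
        a x.1 * ((-1) ^ (x.1 - x.2) * x.1.choose x.2 * z ^ x.2) * t ^ (x.1 - x.2) := by
    intro t
    rw [sum_sigma]
    refine sum_congr rfl fun m _ => ?_
    rw [sub_eq_add_neg, add_pow, mul_sum]
    refine sum_congr rfl fun i _ => ?_
    rw [neg_pow]
    ring
  simp_rw [expand, iterInt_sum_mul_pow, subPowIntegral, mul_sum, sum_sigma]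
  refine sum_congr rfl fun m _ => sum_congr rfl fun i _ => ?_
  ring

theorem sum_sum_Icc_choose_eq_sum_subPowIntegral (P : ℝ) (k : ℕ) (z : ℝ) (a : ℕ → ℝ) (j : ℕ) :
    ∑ i ∈ range (j + 1), ∑ p ∈ Icc i j,
        (-1 : ℝ) ^ p * (p.factorial : ℝ) * (p.choose i : ℝ) * a p *
          P ^ (p - i + 1) / (((p - i : ℕ) : ℝ) + 1) ^ k * (-z) ^ i =
      ∑ p ∈ range (j + 1), a p * (p.factorial * subPowIntegral P k z p) := by
  rw [sum_range_sum_Icc_comm]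
  refine sum_congr rfl fun p _ => ?_
  rw [subPowIntegral, mul_sum, mul_sum]
  refine sum_congr rfl fun i hi => ?_
  obtain ⟨d, rfl⟩ := Nat.exists_eq_add_of_le (mem_range_succ_iff.mp hi)
  have hsign : (-1 : ℝ) ^ (i + d) * (-z) ^ i = (-1) ^ d * z ^ i := by
    rw [neg_pow z, pow_add, mul_mul_mul_comm, ← mul_pow]
    simp
  simp only [Nat.add_sub_cancel_left]
  linear_combination
    (a (i + d) * (i + d).choose i * (i + d).factorial * P ^ (d + 1) / ((d : ℝ) + 1) ^ k) * hsign

theorem stmt19_general (n k : ℕ) (α : ℕ → ℝ) (L : Fin k → ℝ) (z : ℝ) (s : ℕ → ℕ → ℝ)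
    (S : ℕ → ℕ → ℝ)
    (hs : ∀ m ≤ n, ∀ x : ℝ,
      ∏ i ∈ range m, (x - α i) = ∑ j ∈ range (m + 1), s m j * x ^ j)
    (hS : ∀ p ≤ n, ∀ x : ℝ,
      x ^ p = ∑ m ∈ range (p + 1), S p m * ∏ i ∈ range m, (x - α i)) :
    iterInt (List.ofFn L) (fun t => ∏ i ∈ range n, (-t - α i + z)) =
      ∑ j ∈ range (n + 1), ∑ m ∈ Icc j n,
        (-1 : ℝ) ^ j * (s n m * s m j / (m.factorial : ℝ)) *
          ((-1 : ℝ) ^ j * ∑ i ∈ range (j + 1), ∑ p ∈ Icc i j,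
            (-1 : ℝ) ^ p * (p.factorial : ℝ) * (p.choose i : ℝ) * S j p *
              (∏ q, L q) ^ (p - i + 1) / (((p - i : ℕ) : ℝ) + 1) ^ k * (-z) ^ i) := by
  have integrand : (fun t => ∏ i ∈ range n, (-t - α i + z)) =
      fun t => ∑ m ∈ range (n + 1), s n m * (z - t) ^ m := by
    funext t
    rw [← hs n le_rfl]
    exact prod_congr rfl fun i _ => by ring
  rw [integrand, iterInt_sum_mul_sub_pow, List.prod_ofFn, List.length_ofFn, sum_range_sum_Icc_comm]
  simp_rw [sum_sum_Icc_choose_eq_sum_subPowIntegral]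
  refine sum_congr rfl fun m hm => ?_
  set c := subPowIntegral (∏ q, L q) k z
  calc s n m * c m = s n m / m.factorial * (m.factorial * c m) := by field_simp
    _ = s n m / m.factorial * ∑ j ∈ range (m + 1), s m j *
          ∑ p ∈ range (j + 1), S j p * (p.factorial * c p) := by
      rw [sum_stirling_mul_sum_stirling α hs hS _ (mem_range_succ_iff.mp hm)]
    _ = _ := by
      rw [mul_sum]
      refine sum_congr rfl fun j _ => ?_
      have hsq : (-1 : ℝ) ^ j * (-1) ^ j = 1 := by rw [← mul_pow]; simp
      linear_combination (-(s n m * s m j / m.factorial) *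
        ∑ p ∈ range (j + 1), S j p * (p.factorial * c p)) * hsq

theorem stmt19 (n k : ℕ) (hk : 1 ≤ k) (α : ℕ → ℝ) (L : Fin k → ℝ)
    (hL : ∀ i, L i ≠ 0) (z : ℝ) (s : ℕ → ℕ → ℝ) (S : ℕ → ℕ → ℝ)
    (hs : ∀ m ≤ n, ∀ x : ℝ,
      ∏ i ∈ range m, (x - α i) = ∑ j ∈ range (m + 1), s m j * x ^ j)
    (hS : ∀ p ≤ n, ∀ x : ℝ,
      x ^ p = ∑ m ∈ range (p + 1), S p m * ∏ i ∈ range m, (x - α i)) :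
    iterInt (List.ofFn L) (fun t => ∏ i ∈ range n, (-t - α i + z)) =
      ∑ j ∈ range (n + 1), ∑ m ∈ Icc j n,
        (-1 : ℝ) ^ j * (s n m * s m j / (m.factorial : ℝ)) *
          ((-1 : ℝ) ^ j * ∑ i ∈ range (j + 1), ∑ p ∈ Icc i j,
            (-1 : ℝ) ^ p * (p.factorial : ℝ) * (p.choose i : ℝ) * S j p *
              (∏ q, L q) ^ (p - i + 1) / (((p - i : ℕ) : ℝ) + 1) ^ k * (-z) ^ i) :=
  stmt19_general n k α L z s S hs hS
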